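/- Let d be a square-free positive integer of the form d = 7 + 8m for some integer m ≥ 0, and let k = ℚ(√−d) be the imaginary quadratic field obtained by adjoining to ℚ a complex number z with z² = −d. Then the level of k is 4: −1 is a sum of four squares in k, but −1 is not a sum of three squares in k. -/

import Mathlib

/-!
`d` is a sum of four squares `∑ aᵢ²`, so `-1 = d z² / d² = ∑ (aᵢ z / d)²`.

Conversely, writing `xᵢ = aᵢ + bᵢ z` with `aᵢ, bᵢ ∈ ℚ`, the equation `-1 = ∑ xᵢ²` becomes
`∑ aᵢ² + 1 = d ∑ bᵢ²` and `∑ aᵢ bᵢ = 0`. Since `-d ≡ 1 (mod 8)` is a `2`-adic square, say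
`w² ≡ -d`, after clearing denominators the vectors `a + w b` give `∑ (aᵢ + w bᵢ)² + 1 ≡ 0` to
arbitrarily high `2`-adic precision. This is forbidden by the anisotropy of
`x₁² + x₂² + x₃² + x₄²` over `ℚ₂`: all four terms are even as soon as `8` divides the sum.
-/

open Polynomial IntermediateField

theorem exists_neg_one_eq_sum_four_sq {F : Type*} [Field F] {c z : F} (hc : c ≠ 0)
    (hz : z ^ 2 = -c) (hsum : ∃ a₁ a₂ a₃ a₄ : F, c = a₁ ^ 2 + a₂ ^ 2 + a₃ ^ 2 + a₄ ^ 2) :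
    ∃ x₁ x₂ x₃ x₄ : F, -1 = x₁ ^ 2 + x₂ ^ 2 + x₃ ^ 2 + x₄ ^ 2 := by
  obtain ⟨a₁, a₂, a₃, a₄, hsum⟩ := hsum
  refine ⟨a₁ * z / c, a₂ * z / c, a₃ * z / c, a₄ * z / c, ?_⟩
  calc -1 = c * z ^ 2 / c ^ 2 := by rw [hz]; field_simp
    _ = (a₁ ^ 2 + a₂ ^ 2 + a₃ ^ 2 + a₄ ^ 2) * z ^ 2 / c ^ 2 := by rw [← hsum]
    _ = _ := by ring

theorem exists_eq_add_mul_of_mem_adjoin_of_sq_eq {K L : Type*} [Field K] [Field L] [Algebra K L]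
    {z : L} {c : K} (hz : z ^ 2 = algebraMap K L c) {x : L} (hx : x ∈ K⟮z⟯) :
    ∃ a b : K, x = algebraMap K L a + algebraMap K L b * z := by
  have hmonic : (X ^ 2 - C c).Monic := by monicity!
  have hroot : aeval z (X ^ 2 - C c) = 0 := by simp [hz]
  have hdeg : (X ^ 2 - C c).natDegree = 2 := natDegree_X_pow_sub_C
  rw [← mem_toSubalgebra, adjoin_simple_toSubalgebra_of_isAlgebraic
    ⟨_, hmonic.ne_zero, hroot⟩, Algebra.adjoin_singleton_eq_range_aeval] at hx
  obtain ⟨p, rfl⟩ := hx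
  obtain ⟨b, a, hab⟩ := exists_eq_X_add_C_of_natDegree_le_one
    (Nat.le_of_lt_succ (hdeg ▸ natDegree_modByMonic_lt p hmonic (by
      intro h; simp [h] at hdeg)))
  refine ⟨a, b, ?_⟩
  rw [AlgHom.toRingHom_eq_coe, RingHom.coe_coe, ← aeval_modByMonic_eq_self_of_root hroot, hab]
  simp [add_comm]

theorem Complex.eq_zero_of_ratCast_add_ratCast_mul_eq_zero {z : ℂ} (hz : z.im ≠ 0) {a b : ℚ}
    (h : (a : ℂ) + b * z = 0) : a = 0 ∧ b = 0 := by
  have hb : b = 0 := by simpa [hz] using congrArg Complex.im h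
  subst hb
  exact ⟨by simpa using h, rfl⟩

theorem Complex.im_ne_zero_of_sq_eq_neg {z : ℂ} {r : ℝ} (hr : 0 < r) (hz : z ^ 2 = -r) :
    z.im ≠ 0 := by
  intro h
  have := congrArg Complex.re hz
  simp [pow_two, h] at this
  nlinarith [sq_nonneg z.re]

theorem two_dvd_of_eight_dvd_sum_four_sq {a b c e : ℤ} (h : 8 ∣ a ^ 2 + b ^ 2 + c ^ 2 + e ^ 2) :
    2 ∣ a ∧ 2 ∣ b ∧ 2 ∣ c ∧ 2 ∣ e := by
  -- `4 * x = 0` in `ZMod 8` exactly when `x` is even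
  have key : ∀ a b c e : ZMod 8, a ^ 2 + b ^ 2 + c ^ 2 + e ^ 2 = 0 →
      4 * a = 0 ∧ 4 * b = 0 ∧ 4 * c = 0 ∧ 4 * e = 0 := by decide
  have two_dvd {x : ℤ} (hx : ((4 * x : ℤ) : ZMod 8) = 0) : 2 ∣ x := by
    have := (ZMod.intCast_zmod_eq_zero_iff_dvd _ 8).1 hx
    omega
  obtain ⟨ha, hb, hc, he⟩ :=
    key a b c e (by exact_mod_cast (ZMod.intCast_zmod_eq_zero_iff_dvd _ 8).2 h)
  exact ⟨two_dvd (by exact_mod_cast ha), two_dvd (by exact_mod_cast hb),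
    two_dvd (by exact_mod_cast hc), two_dvd (by exact_mod_cast he)⟩

theorem two_pow_dvd_of_two_pow_dvd_sum_four_sq (n : ℕ) {a b c e : ℤ}
    (h : 2 ^ (2 * n + 3) ∣ a ^ 2 + b ^ 2 + c ^ 2 + e ^ 2) : 2 ^ (n + 1) ∣ e := by
  induction n generalizing a b c e with
  | zero => exact (two_dvd_of_eight_dvd_sum_four_sq (by simpa using h)).2.2.2
  | succ n ih =>
    obtain ⟨⟨a, rfl⟩, ⟨b, rfl⟩, ⟨c, rfl⟩, ⟨e, rfl⟩⟩ :=
      two_dvd_of_eight_dvd_sum_four_sq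
        ((pow_dvd_pow 2 (by omega : 3 ≤ 2 * (n + 1) + 3)).trans h)
    have h' : 4 * 2 ^ (2 * n + 3) ∣ 4 * (a ^ 2 + b ^ 2 + c ^ 2 + e ^ 2) := by
      convert h using 1 <;> ring
    rw [pow_succ, mul_comm]
    exact mul_dvd_mul_left 2 (ih (Int.dvd_of_mul_dvd_mul_left (by norm_num) h'))

theorem eq_zero_of_forall_exists_two_pow_dvd_sum_four_sq {e : ℤ}
    (h : ∀ n : ℕ, ∃ a b c : ℤ, 2 ^ n ∣ a ^ 2 + b ^ 2 + c ^ 2 + e ^ 2) : e = 0 := by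
  obtain ⟨a, b, c, hdvd⟩ := h (2 * e.natAbs + 3)
  refine Int.eq_zero_of_dvd_of_natAbs_lt_natAbs
    (two_pow_dvd_of_two_pow_dvd_sum_four_sq e.natAbs hdvd) ?_
  simpa [Int.natAbs_pow] using (Nat.lt_two_pow_self).trans (Nat.pow_lt_pow_succ one_lt_two)

theorem exists_odd_two_pow_dvd_sq_add {d : ℤ} (hd : 8 ∣ d + 1) (n : ℕ) :
    ∃ w : ℤ, Odd w ∧ 2 ^ (n + 3) ∣ w ^ 2 + d := by
  induction n with
  | zero => exact ⟨1, odd_one, by simpa [add_comm] using hd⟩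
  | succ n ih =>
    obtain ⟨w, ⟨c, rfl⟩, t, ht⟩ := ih
    rcases Int.even_or_odd t with ⟨u, rfl⟩ | ⟨u, rfl⟩
    · exact ⟨2 * c + 1, ⟨c, rfl⟩, u, by linear_combination ht⟩
    · -- the odd quotient is absorbed by the cross term `2 * w * 2 ^ (n + 2)`
      refine ⟨2 * c + 1 + 2 ^ (n + 2), ⟨c + 2 ^ (n + 1), by ring⟩, u + c + 1 + 2 ^ n, ?_⟩
      linear_combination ht

theorem Int.eq_zero_of_sum_three_sq_add_sq_eq_mul {d : ℤ} (hd : 8 ∣ d + 1)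
    {p₁ p₂ p₃ q r₁ r₂ r₃ : ℤ}
    (h₁ : p₁ ^ 2 + p₂ ^ 2 + p₃ ^ 2 + q ^ 2 = d * (r₁ ^ 2 + r₂ ^ 2 + r₃ ^ 2))
    (h₂ : p₁ * r₁ + p₂ * r₂ + p₃ * r₃ = 0) : q = 0 := by
  refine eq_zero_of_forall_exists_two_pow_dvd_sum_four_sq fun n ↦ ?_
  obtain ⟨w, -, hw⟩ := exists_odd_two_pow_dvd_sq_add hd n
  refine ⟨p₁ + r₁ * w, p₂ + r₂ * w, p₃ + r₃ * w, ?_⟩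
  have hsum : (p₁ + r₁ * w) ^ 2 + (p₂ + r₂ * w) ^ 2 + (p₃ + r₃ * w) ^ 2 + q ^ 2 =
      (w ^ 2 + d) * (r₁ ^ 2 + r₂ ^ 2 + r₃ ^ 2) := by
    linear_combination h₁ + 2 * w * h₂
  exact hsum ▸ ((pow_dvd_pow 2 (Nat.le_add_right n 3)).trans hw).mul_right _

theorem Rat.eq_zero_of_sum_three_sq_add_sq_eq_mul {d : ℤ} (hd : 8 ∣ d + 1)
    {p₁ p₂ p₃ q r₁ r₂ r₃ : ℚ}
    (h₁ : p₁ ^ 2 + p₂ ^ 2 + p₃ ^ 2 + q ^ 2 = d * (r₁ ^ 2 + r₂ ^ 2 + r₃ ^ 2))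
    (h₂ : p₁ * r₁ + p₂ * r₂ + p₃ * r₃ = 0) : q = 0 := by
  obtain ⟨⟨D, hD⟩, hint⟩ := IsLocalization.exist_integer_multiples_of_finset
    (nonZeroDivisors ℤ) {p₁, p₂, p₃, q, r₁, r₂, r₃}
  have clear (x : ℚ) (hx : x ∈ ({p₁, p₂, p₃, q, r₁, r₂, r₃} : Finset ℚ)) :
      ∃ y : ℤ, (y : ℚ) = D * x := by
    simpa [IsLocalization.IsInteger] using hint x hx
  obtain ⟨P₁, hP₁⟩ := clear p₁ (by simp)
  obtain ⟨P₂, hP₂⟩ := clear p₂ (by simp)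
  obtain ⟨P₃, hP₃⟩ := clear p₃ (by simp)
  obtain ⟨Q, hQ⟩ := clear q (by simp)
  obtain ⟨R₁, hR₁⟩ := clear r₁ (by simp)
  obtain ⟨R₂, hR₂⟩ := clear r₂ (by simp)
  obtain ⟨R₃, hR₃⟩ := clear r₃ (by simp)
  have hQ0 : Q = 0 := by
    refine Int.eq_zero_of_sum_three_sq_add_sq_eq_mul hd (p₁ := P₁) (p₂ := P₂) (p₃ := P₃)
      (r₁ := R₁) (r₂ := R₂) (r₃ := R₃) ?_ ?_ <;> refine Int.cast_injective (α := ℚ) ?_ <;>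
      push_cast [hP₁, hP₂, hP₃, hQ, hR₁, hR₂, hR₃]
    · linear_combination (D : ℚ) ^ 2 * h₁
    · linear_combination (D : ℚ) ^ 2 * h₂
  have hD0 : (D : ℚ) ≠ 0 := by exact_mod_cast nonZeroDivisors.ne_zero hD
  simpa [hQ0, hD0] using hQ

theorem exists_rat_of_neg_one_eq_sum_three_sq {z : ℂ} {d : ℚ} (hd : 0 < d) (hz : z ^ 2 = -d)
    {x₁ x₂ x₃ : ℚ⟮z⟯} (hx : -1 = x₁ ^ 2 + x₂ ^ 2 + x₃ ^ 2) :
    ∃ a₁ a₂ a₃ b₁ b₂ b₃ : ℚ, a₁ ^ 2 + a₂ ^ 2 + a₃ ^ 2 + 1 ^ 2 = d * (b₁ ^ 2 + b₂ ^ 2 + b₃ ^ 2) ∧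
      a₁ * b₁ + a₂ * b₂ + a₃ * b₃ = 0 := by
  have hz' : z ^ 2 = algebraMap ℚ ℂ (-d) := by simpa using hz
  obtain ⟨a₁, b₁, hx₁⟩ := exists_eq_add_mul_of_mem_adjoin_of_sq_eq hz' x₁.2
  obtain ⟨a₂, b₂, hx₂⟩ := exists_eq_add_mul_of_mem_adjoin_of_sq_eq hz' x₂.2
  obtain ⟨a₃, b₃, hx₃⟩ := exists_eq_add_mul_of_mem_adjoin_of_sq_eq hz' x₃.2
  have hC : (-1 : ℂ) = x₁ ^ 2 + x₂ ^ 2 + x₃ ^ 2 := by exact_mod_cast congrArg Subtype.val hx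
  simp only [hx₁, hx₂, hx₃, eq_ratCast] at hC
  have him : z.im ≠ 0 := Complex.im_ne_zero_of_sq_eq_neg (r := d) (by exact_mod_cast hd)
    (by simpa using hz)
  obtain ⟨hre, hcross⟩ := Complex.eq_zero_of_ratCast_add_ratCast_mul_eq_zero him
    (a := a₁ ^ 2 + a₂ ^ 2 + a₃ ^ 2 + 1 ^ 2 - d * (b₁ ^ 2 + b₂ ^ 2 + b₃ ^ 2))
    (b := 2 * (a₁ * b₁ + a₂ * b₂ + a₃ * b₃))
    (by push_cast; linear_combination -hC - (b₁ ^ 2 + b₂ ^ 2 + b₃ ^ 2 : ℂ) * hz)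
  exact ⟨a₁, a₂, a₃, b₁, b₂, b₃, sub_eq_zero.1 hre,
    (mul_eq_zero.1 hcross).resolve_left two_ne_zero⟩

theorem level_four_imaginary_quadratic_general
    (d : ℕ) (m : ℕ) (hd : d = 7 + 8 * m)
    (z : ℂ) (hz : z ^ 2 = -(d : ℂ))
    (k : IntermediateField ℚ ℂ) (hk : k = IntermediateField.adjoin ℚ {z}) :
    (∃ x₁ x₂ x₃ x₄ : k, (-1 : k) = x₁ ^ 2 + x₂ ^ 2 + x₃ ^ 2 + x₄ ^ 2) ∧
      ¬ ∃ x₁ x₂ x₃ : k, (-1 : k) = x₁ ^ 2 + x₂ ^ 2 + x₃ ^ 2 := by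
  subst hk
  have hd0 : 0 < d := by omega
  refine ⟨?_, ?_⟩
  · obtain ⟨a₁, a₂, a₃, a₄, hsum⟩ := Nat.sum_four_squares d
    exact exists_neg_one_eq_sum_four_sq (z := ⟨z, mem_adjoin_simple_self ℚ z⟩) (c := d)
      (by exact_mod_cast hd0.ne') (Subtype.ext (by push_cast; exact hz))
      ⟨a₁, a₂, a₃, a₄, by exact_mod_cast hsum.symm⟩
  · rintro ⟨x₁, x₂, x₃, hx⟩
    obtain ⟨a₁, a₂, a₃, b₁, b₂, b₃, h₁, h₂⟩ :=
      exists_rat_of_neg_one_eq_sum_three_sq (d := d) (by exact_mod_cast hd0) (by simpa using hz) hx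
    have hd8 : (8 : ℤ) ∣ d + 1 := ⟨m + 1, by rw [hd]; push_cast; ring⟩
    exact one_ne_zero (Rat.eq_zero_of_sum_three_sq_add_sq_eq_mul hd8 (by exact_mod_cast h₁) h₂)

/-- If `d = 7 + 8m` is a square-free positive integer and `k = ℚ(√-d) ⊆ ℂ` is the imaginary
quadratic field generated by a square root `z` of `-d`, then the level of `k` is `4`:
`-1` is a sum of four squares in `k` but not a sum of three squares in `k`. -/
theorem level_four_imaginary_quadratic
    (d : ℕ) (hsf : Squarefree d) (m : ℕ) (hd : d = 7 + 8 * m)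
    (z : ℂ) (hz : z ^ 2 = -(d : ℂ))
    (k : IntermediateField ℚ ℂ) (hk : k = IntermediateField.adjoin ℚ {z}) :
    (∃ x₁ x₂ x₃ x₄ : k, (-1 : k) = x₁ ^ 2 + x₂ ^ 2 + x₃ ^ 2 + x₄ ^ 2) ∧
      ¬ ∃ x₁ x₂ x₃ : k, (-1 : k) = x₁ ^ 2 + x₂ ^ 2 + x₃ ^ 2 :=
  level_four_imaginary_quadratic_general d m hd z hz k hk
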